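/- Let D = {1, …, k²+1} and suppose ℓ* = (c, s*, A*) is produced by nextLabel from input labels ℓ₁, …, ℓ_m (m ≤ k, all with creator c), so that {ℓⱼ.s} ⊆ A* and s* ∉ A* ∪ ⋃ⱼ ℓⱼ.A. Then ℓ* is not canceled by any input: for every j, it is not the case that ℓ* ≺ ℓⱼ, and ℓ* is not incomparable with ℓⱼ. -/
import Mathlib

structure Label where
  c : ℕ
  s : ℕ
  A : Finset ℕ

def Label.prec (l1 l2 : Label) : Prop :=
  l1.c < l2.c ∨ (l1.c = l2.c ∧ l1.s ∈ l2.A ∧ l2.s ∉ l1.A)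

theorem stmt_13 (k : ℕ) (hk : 1 ≤ k) (m : ℕ) (hm : m ≤ k)
    (ℓ : Fin m → Label) (c : ℕ) (hcreator : ∀ j, (ℓ j).c = c)
    (Astar : Finset ℕ) (sstar : ℕ)
    (hA : Astar ⊆ Finset.Icc 1 (k ^ 2 + 1)) (hAcard : Astar.card = k)
    (hstings : ∀ j, (ℓ j).s ∈ Astar)
    (hsA : sstar ∉ Astar) (hs : ∀ j, sstar ∉ (ℓ j).A) :
    ∀ j, (ℓ j).prec ⟨c, sstar, Astar⟩ ∧ ¬ (Label.prec ⟨c, sstar, Astar⟩ (ℓ j)) := by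
  intro j
  constructor
  · exact Or.inr ⟨hcreator j, hstings j, hs j⟩
  · rintro (h | ⟨-, h, -⟩)
    · exact absurd (hcreator j) (by simpa using h.ne')
    · exact hs j h
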